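/- arXiv:2206.12701 — 2 statements merged into one kernel-verified Lean document; each statement's English description precedes it below -/
import Mathlib

section
/- Under the bandwagon rating process, conditional on p̄_m ≠ p, subsequent sample means are conditionally biased: for n > m ≥ 1, if p̄_m ≠ p (and λ_i/i < 1 for all i) then E[p̄_n | p̄_m] ≠ p. -/
open MeasureTheory ProbabilityTheory Finset Filter

/-- Sample mean of the first `n` ratings (ratings are indexed from 1). -/
noncomputable def pbar {Ω : Type*} (r : ℕ → Ω → ℝ) (n : ℕ) (ω : Ω) : ℝ :=
  (∑ i ∈ Finset.Icc 1 n, r i ω) / n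

/-- σ-algebra generated by the first `n` ratings. -/
def ratingsAlg {Ω : Type*} (r : ℕ → Ω → ℝ) (n : ℕ) : MeasurableSpace Ω :=
  ⨆ i ∈ Finset.Icc 1 n, MeasurableSpace.comap (r i) (inferInstance : MeasurableSpace ℝ)

/-- The bandwagon rating process of Xie et al., as used in the paper. -/
structure Bandwagon {Ω : Type*} [MeasurableSpace Ω] (μ : Measure Ω)
    (p : ℝ) (lam : ℕ → ℝ) (r : ℕ → Ω → ℝ) : Prop where
  prob : IsProbabilityMeasure μ
  hp : 0 < p ∧ p < 1
  hlam1 : lam 1 = 1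
  hlam_nonneg : ∀ n, 1 ≤ n → 0 ≤ lam n
  hlam_mono : ∀ n, 2 ≤ n → lam n ≤ lam (n - 1)
  hmeas : ∀ n, Measurable (r n)
  hbin : ∀ n, 1 ≤ n → ∀ ω, r n ω = 0 ∨ r n ω = 1
  hfirst : ∫ ω, r 1 ω ∂μ = p
  hcond : ∀ n, 2 ≤ n →
    μ[r n | ratingsAlg r (n - 1)] =ᵐ[μ]
      fun ω => lam n * p + (1 - lam n) * pbar r (n - 1) ω

/-- Affine-corrected rating `r̂ᵢ`. -/
noncomputable def rhat {Ω : Type*} (r : ℕ → Ω → ℝ) (lam : ℕ → ℝ) (i : ℕ) (ω : Ω) : ℝ :=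
  (r i ω - (1 - lam i) * pbar r (i - 1) ω) / lam i

/-! Given the first `n` ratings, the next rating has mean `λₙ₊₁ p + (1 - λₙ₊₁) p̄ₙ`, so the
deviation `p̄ₙ - p` of the sample mean contracts in conditional mean by the factor
`1 - λₙ₊₁ / (n + 1)`. By the tower property,
`E[p̄ₙ - p | p̄ₘ] = (p̄ₘ - p) ∏_{m < i ≤ n} (1 - λᵢ / i)`,
and this product of positive factors does not vanish. -/

lemma condExp_const_add_mul_sub {Ω : Type*} {m m0 : MeasurableSpace Ω} {μ : Measure Ω}
    [IsFiniteMeasure μ] (hm : m ≤ m0) {f : Ω → ℝ} (hf : Integrable f μ) (a c : ℝ) :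
    μ[fun ω => a + c * (f ω - a) | m] =ᵐ[μ] fun ω => a + c * (μ[f | m] ω - a) := by
  have hsplit : (fun ω => a + c * (f ω - a)) = (fun _ => a - c * a) + c • f := by
    funext ω
    simp only [Pi.add_apply, Pi.smul_apply, smul_eq_mul]
    ring
  rw [hsplit]
  filter_upwards [condExp_add (integrable_const (a - c * a)) (hf.smul c) m, condExp_smul c f m]
    with ω hadd hsmul
  simp only [hadd, Pi.add_apply, condExp_const hm, hsmul, Pi.smul_apply, smul_eq_mul]
  ring

noncomputable def meanContraction (lam : ℕ → ℝ) (m n : ℕ) : ℝ :=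
  ∏ i ∈ Icc (m + 1) n, (1 - lam i / i)

lemma meanContraction_self (lam : ℕ → ℝ) (m : ℕ) : meanContraction lam m m = 1 := by
  simp [meanContraction]

lemma meanContraction_succ (lam : ℕ → ℝ) {m n : ℕ} (h : m ≤ n) :
    meanContraction lam m (n + 1) =
      meanContraction lam m n * (1 - lam (n + 1) / (n + 1)) := by
  rw [meanContraction, prod_Icc_succ_top (by omega), meanContraction]
  push_cast
  rfl

lemma meanContraction_pos {lam : ℕ → ℝ} {m n : ℕ}
    (hlt : ∀ i, m < i → i ≤ n → lam i < i) : 0 < meanContraction lam m n :=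
  prod_pos fun i hi => by
    obtain ⟨him, hin⟩ := mem_Icc.mp hi
    rw [sub_pos, div_lt_one (by exact_mod_cast (m.succ_pos.trans_le him))]
    exact hlt i him hin

section Ratings

variable {Ω : Type*} {r : ℕ → Ω → ℝ}

lemma comap_le_ratingsAlg {n i : ℕ} (hi : i ∈ Icc 1 n) :
    MeasurableSpace.comap (r i) inferInstance ≤ ratingsAlg r n :=
  le_iSup₂ (f := fun i (_ : i ∈ Icc 1 n) => MeasurableSpace.comap (r i) inferInstance) i hi

lemma ratingsAlg_mono {m n : ℕ} (h : m ≤ n) : ratingsAlg r m ≤ ratingsAlg r n :=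
  iSup₂_le fun _ hi => comap_le_ratingsAlg (Icc_subset_Icc_right h hi)

lemma measurable_pbar_ratingsAlg (n : ℕ) : Measurable[ratingsAlg r n] (pbar r n) :=
  (measurable_sum _ fun _ hi => measurable_iff_comap_le.mpr (comap_le_ratingsAlg hi)).div_const _

lemma sum_Icc_eq_mul_pbar (n : ℕ) (ω : Ω) : ∑ i ∈ Icc 1 n, r i ω = n * pbar r n ω := by
  rcases Nat.eq_zero_or_pos n with rfl | hn
  · simp
  · rw [pbar, mul_div_cancel₀ _ (by positivity)]

lemma pbar_succ (n : ℕ) :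
    pbar r (n + 1) = ((n : ℝ) + 1)⁻¹ • ((n : ℝ) • pbar r n + r (n + 1)) := by
  funext ω
  rw [show pbar r (n + 1) ω = (∑ i ∈ Icc 1 (n + 1), r i ω) / (n + 1 : ℕ) from rfl,
    sum_Icc_succ_top (Nat.le_add_left 1 n), sum_Icc_eq_mul_pbar]
  simp only [Pi.smul_apply, Pi.add_apply, smul_eq_mul]
  push_cast
  ring

variable [m0 : MeasurableSpace Ω] {μ : Measure Ω} {p : ℝ} {lam : ℕ → ℝ}

lemma ratingsAlg_le (hmeas : ∀ n, Measurable (r n)) (n : ℕ) : ratingsAlg r n ≤ m0 :=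
  iSup₂_le fun i _ => (hmeas i).comap_le

lemma Bandwagon.integrable_rating (hbw : Bandwagon μ p lam r) {i : ℕ} (hi : 1 ≤ i) :
    Integrable (r i) μ := by
  have := hbw.prob
  refine (integrable_const (1 : ℝ)).mono' (hbw.hmeas i).aestronglyMeasurable
    (Eventually.of_forall fun ω => ?_)
  rcases hbw.hbin i hi ω with h | h <;> simp [h]

lemma Bandwagon.integrable_pbar (hbw : Bandwagon μ p lam r) (n : ℕ) :
    Integrable (pbar r n) μ := by
  have := hbw.prob
  exact (integrable_finsetSum _ fun _ hi =>
    hbw.integrable_rating (mem_Icc.mp hi).1).div_const _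

lemma Bandwagon.condExp_pbar_succ (hbw : Bandwagon μ p lam r) {n : ℕ} (hn : 1 ≤ n) :
    μ[pbar r (n + 1) | ratingsAlg r n] =ᵐ[μ]
      fun ω => p + (1 - lam (n + 1) / (n + 1)) * (pbar r n ω - p) := by
  have := hbw.prob
  have hcond : μ[r (n + 1) | ratingsAlg r n] =ᵐ[μ]
      fun ω => lam (n + 1) * p + (1 - lam (n + 1)) * pbar r n ω := by
    simpa using hbw.hcond (n + 1) (by omega)
  have hmean : μ[pbar r n | ratingsAlg r n] = pbar r n :=
    condExp_of_stronglyMeasurable (ratingsAlg_le hbw.hmeas n)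
      (measurable_pbar_ratingsAlg n).stronglyMeasurable (hbw.integrable_pbar n)
  rw [pbar_succ]
  filter_upwards
    [condExp_smul ((n : ℝ) + 1)⁻¹ ((n : ℝ) • pbar r n + r (n + 1)) (ratingsAlg r n),
    condExp_add ((hbw.integrable_pbar n).smul (n : ℝ))
      (hbw.integrable_rating (Nat.le_add_left 1 n)) (ratingsAlg r n),
    condExp_smul (n : ℝ) (pbar r n) (ratingsAlg r n), hcond] with ω h₁ h₂ h₃ h₄
  simp only [h₁, Pi.smul_apply, h₂, Pi.add_apply, h₃, hmean, h₄, smul_eq_mul]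
  field_simp
  ring

lemma Bandwagon.condExp_pbar_ratingsAlg (hbw : Bandwagon μ p lam r) {m n : ℕ} (hm : 1 ≤ m)
    (hmn : m ≤ n) :
    μ[pbar r n | ratingsAlg r m] =ᵐ[μ]
      fun ω => p + meanContraction lam m n * (pbar r m ω - p) := by
  have := hbw.prob
  have hFm := ratingsAlg_le hbw.hmeas m
  induction n, hmn using Nat.le_induction with
  | base =>
    rw [condExp_of_stronglyMeasurable hFm (measurable_pbar_ratingsAlg m).stronglyMeasurable
      (hbw.integrable_pbar m)]
    exact Eventually.of_forall fun ω => by simp [meanContraction_self]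
  | succ n hmn ih =>
    calc μ[pbar r (n + 1) | ratingsAlg r m]
        =ᵐ[μ] μ[μ[pbar r (n + 1) | ratingsAlg r n] | ratingsAlg r m] :=
          (condExp_condExp_of_le (ratingsAlg_mono hmn) (ratingsAlg_le hbw.hmeas n)).symm
      _ =ᵐ[μ] μ[fun ω => p + (1 - lam (n + 1) / (n + 1)) * (pbar r n ω - p)
            | ratingsAlg r m] :=
          condExp_congr_ae (hbw.condExp_pbar_succ (hm.trans hmn))
      _ =ᵐ[μ] _ := by
          filter_upwards [condExp_const_add_mul_sub hFm (hbw.integrable_pbar n) p _, ih]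
            with ω h₁ h₂
          rw [h₁, h₂, meanContraction_succ lam hmn]
          ring

lemma Bandwagon.condExp_pbar_comap_pbar (hbw : Bandwagon μ p lam r) {m n : ℕ} (hm : 1 ≤ m)
    (hmn : m ≤ n) :
    μ[pbar r n | MeasurableSpace.comap (pbar r m) inferInstance] =ᵐ[μ]
      fun ω => p + meanContraction lam m n * (pbar r m ω - p) := by
  have := hbw.prob
  have hGF := measurable_iff_comap_le.mp (measurable_pbar_ratingsAlg (r := r) m)
  have hFm := ratingsAlg_le hbw.hmeas m
  have hmeas : Measurable[MeasurableSpace.comap (pbar r m) inferInstance]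
      fun ω => p + meanContraction lam m n * (pbar r m ω - p) :=
    (comap_measurable (pbar r m)).sub_const p |>.const_mul _ |>.const_add p
  calc μ[pbar r n | MeasurableSpace.comap (pbar r m) inferInstance]
      =ᵐ[μ] μ[μ[pbar r n | ratingsAlg r m] | MeasurableSpace.comap (pbar r m) inferInstance] :=
        (condExp_condExp_of_le hGF hFm).symm
    _ =ᵐ[μ] _ := condExp_congr_ae (hbw.condExp_pbar_ratingsAlg hm hmn)
    _ = _ := condExp_of_stronglyMeasurable (hGF.trans hFm) hmeas.stronglyMeasurable
        ((integrable_const p).add ((hbw.integrable_pbar m).sub (integrable_const p)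
          |>.const_mul _))

end Ratings

theorem bandwagon_conditional_bias_nonzero {Ω : Type*} [MeasurableSpace Ω] (μ : MeasureTheory.Measure Ω)
    (p : ℝ) (lam : ℕ → ℝ) (r : ℕ → Ω → ℝ)
    (hbw : Bandwagon μ p lam r) :
    ∀ m n, 1 ≤ m → m < n → (∀ i, m < i → i ≤ n → lam i < (i : ℝ)) →
      ∀ᵐ ω ∂μ, pbar r m ω ≠ p →
        (μ[pbar r n |
          MeasurableSpace.comap (pbar r m) (inferInstance : MeasurableSpace ℝ)]) ω ≠ p := by
  intro m n hm hmn hlt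
  filter_upwards [hbw.condExp_pbar_comap_pbar hm hmn.le] with ω hω hne
  rw [hω, ne_eq, add_eq_left, mul_eq_zero, not_or, sub_eq_zero]
  exact ⟨(meanContraction_pos hlt).ne', hne⟩
end

section
/- If λ_i = c^{i-1} with c ∈ (0,1), the asymptotic expected absolute error of the sample mean under the bandwagon process is bounded below: lim_{n→∞} E[|p̄_n - p|] ≥ 2p(1-p) · exp( -c·Φ(c,1,2) - c²·Φ(c²,2,2) ), where Φ(z,s,a) = Σ_{k=0}^{∞} z^k/(a+k)^s is the Lerch transcendent. -/
open MeasureTheory ProbabilityTheory Finset Filter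

/-- Lerch transcendent `Φ(z,s,a) = Σ_k z^k/(a+k)^s`. -/
noncomputable def lerch (z : ℝ) (s a : ℕ) : ℝ := ∑' k : ℕ, z ^ k / ((a : ℝ) + k) ^ s

/-!
Let `s = 2 r₁ - 1 ∈ {-1, 1}`, so that `E|p̄ₙ - p| ≥ E[(p̄ₙ - p) s]`. Given the first `n` ratings,
`p̄ₙ₊₁ - p` has conditional mean `(1 - λₙ₊₁/(n+1)) (p̄ₙ - p)`, and `s` is measurable for that
history; hence `E[(p̄ₙ - p) s] = E[(r₁ - p) s] ∏_{i=2}^n (1 - λᵢ/i) = 2p(1-p) ∏_{i=2}^n (1 - λᵢ/i)`.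
For `λᵢ = c^(i-1)` the numbers `xᵢ = c^(i-1)/i` lie in `[0, 1/2]`, where `1 - x ≥ exp (-(x + x²))`,
and after the shift `i = k + 2` the sum of `xᵢ + xᵢ²` is a partial sum of
`c Φ(c,1,2) + c² Φ(c²,2,2)`.
-/

section RatingSequences

variable {Ω : Type*} {r : ℕ → Ω → ℝ}

lemma pbar_one (r : ℕ → Ω → ℝ) (ω : Ω) : pbar r 1 ω = r 1 ω := by
  simp [pbar]

lemma pbar_succ_s13 (r : ℕ → Ω → ℝ) (n : ℕ) (ω : Ω) :
    pbar r (n + 1) ω = (n * pbar r n ω + r (n + 1) ω) / (n + 1) := by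
  rcases n.eq_zero_or_pos with rfl | hn
  · simp [pbar]
  · have hn' : (n : ℝ) ≠ 0 := by positivity
    simp only [pbar, sum_Icc_succ_top (by omega : 1 ≤ n + 1), mul_div_cancel₀ _ hn']
    push_cast
    rfl

lemma pbar_mem_Icc {ω : Ω} (hr : ∀ i, 1 ≤ i → r i ω ∈ Set.Icc (0 : ℝ) 1) (n : ℕ) :
    pbar r n ω ∈ Set.Icc (0 : ℝ) 1 := by
  have hsum : ∑ i ∈ Icc 1 n, r i ω ∈ Set.Icc (0 : ℝ) n := by
    constructor
    · exact sum_nonneg fun i hi => (hr i (mem_Icc.1 hi).1).1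
    · simpa using sum_le_sum fun i hi => (hr i (mem_Icc.1 hi).1).2
  exact ⟨div_nonneg hsum.1 n.cast_nonneg, div_le_one_of_le₀ hsum.2 n.cast_nonneg⟩

lemma ratingsAlg_mono_s13 (r : ℕ → Ω → ℝ) : Monotone (ratingsAlg r) :=
  fun _ _ hnm => biSup_mono fun _ hi => Icc_subset_Icc le_rfl hnm hi

lemma measurable_rating_ratingsAlg {i n : ℕ} (hi : i ∈ Icc 1 n) :
    Measurable[ratingsAlg r n] (r i) :=
  (comap_measurable (r i)).mono (le_iSup₂ (f := fun j (_ : j ∈ Icc 1 n) =>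
    MeasurableSpace.comap (r j) (inferInstance : MeasurableSpace ℝ)) i hi) le_rfl

variable [MeasurableSpace Ω]

lemma measurable_pbar (hr : ∀ i, Measurable (r i)) (n : ℕ) : Measurable (pbar r n) :=
  (Finset.measurable_sum _ fun i _ => hr i).div_const _

lemma ratingsAlg_le_s13 (hr : ∀ i, Measurable (r i)) (n : ℕ) :
    ratingsAlg r n ≤ ‹MeasurableSpace Ω› :=
  iSup₂_le fun i _ => (hr i).comap_le

end RatingSequences

namespace Bandwagon

variable {Ω : Type*} [MeasurableSpace Ω] {μ : Measure Ω} {p : ℝ} {lam : ℕ → ℝ}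
  {r : ℕ → Ω → ℝ}

lemma rating_mem_Icc (hbw : Bandwagon μ p lam r) {i : ℕ} (hi : 1 ≤ i) (ω : Ω) :
    r i ω ∈ Set.Icc (0 : ℝ) 1 := by
  rcases hbw.hbin i hi ω with h | h <;> simp [h]

lemma abs_pbar_sub_le_one (hbw : Bandwagon μ p lam r) (n : ℕ) (ω : Ω) :
    |pbar r n ω - p| ≤ 1 := by
  have hpbar := pbar_mem_Icc (fun i hi => hbw.rating_mem_Icc hi ω) n
  have hp := hbw.hp
  rw [abs_le]
  constructor <;> linarith [hpbar.1, hpbar.2]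

lemma integrable_rating_s13 (hbw : Bandwagon μ p lam r) {i : ℕ} (hi : 1 ≤ i) :
    Integrable (r i) μ :=
  have := hbw.prob
  .of_bound (hbw.hmeas i).aestronglyMeasurable 1 (ae_of_all _ fun ω => by
    have h := hbw.rating_mem_Icc hi ω
    rw [Real.norm_eq_abs, abs_le]
    constructor <;> linarith [h.1, h.2])

lemma integrable_pbar_sub (hbw : Bandwagon μ p lam r) (n : ℕ) :
    Integrable (fun ω => pbar r n ω - p) μ :=
  have := hbw.prob
  .of_bound ((measurable_pbar hbw.hmeas n).sub_const p).aestronglyMeasurable 1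
    (ae_of_all _ (hbw.abs_pbar_sub_le_one n))

lemma integral_mul_rating_succ (hbw : Bandwagon μ p lam r) {n : ℕ} (hn : 1 ≤ n) {Y : Ω → ℝ}
    (hY : StronglyMeasurable[ratingsAlg r n] Y) {C : ℝ} (hYC : ∀ᵐ ω ∂μ, ‖Y ω‖ ≤ C) :
    ∫ ω, Y ω * r (n + 1) ω ∂μ
      = ∫ ω, Y ω * (lam (n + 1) * p + (1 - lam (n + 1)) * pbar r n ω) ∂μ := by
  have := hbw.prob
  have hm := ratingsAlg_le_s13 hbw.hmeas n
  have hcond := hbw.hcond (n + 1) (by omega)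
  rw [Nat.add_sub_cancel] at hcond
  calc ∫ ω, Y ω * r (n + 1) ω ∂μ = ∫ ω, μ[Y * r (n + 1) | ratingsAlg r n] ω ∂μ :=
        (integral_condExp hm).symm
    _ = ∫ ω, Y ω * μ[r (n + 1) | ratingsAlg r n] ω ∂μ := integral_congr_ae
        (condExp_stronglyMeasurable_mul_of_bound hm hY (hbw.integrable_rating_s13 (by omega)) C hYC)
    _ = _ := integral_congr_ae (hcond.mono fun ω h => congrArg (Y ω * ·) h)

lemma integral_pbar_sub_mul_succ (hbw : Bandwagon μ p lam r) {n : ℕ} (hn : 1 ≤ n)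
    {Y : Ω → ℝ} (hY : StronglyMeasurable[ratingsAlg r n] Y) {C : ℝ}
    (hYC : ∀ᵐ ω ∂μ, ‖Y ω‖ ≤ C) :
    ∫ ω, (pbar r (n + 1) ω - p) * Y ω ∂μ
      = (1 - lam (n + 1) / (n + 1)) * ∫ ω, (pbar r n ω - p) * Y ω ∂μ := by
  have := hbw.prob
  have hYm : AEStronglyMeasurable Y μ :=
    (hY.mono (ratingsAlg_le_s13 hbw.hmeas n)).aestronglyMeasurable
  set m : Ω → ℝ := fun ω => lam (n + 1) * p + (1 - lam (n + 1)) * pbar r n ω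
  have hm : Integrable m μ := by
    refine ((hbw.integrable_pbar_sub n).const_mul (1 - lam (n + 1))).add
      (integrable_const p) |>.congr (ae_of_all _ fun ω => ?_)
    simp only [m, Pi.add_apply]
    ring
  have hdecomp : ∀ ω, (pbar r (n + 1) ω - p) * Y ω
      = (1 - lam (n + 1) / (n + 1)) * ((pbar r n ω - p) * Y ω)
        + (Y ω * r (n + 1) ω - Y ω * m ω) / (n + 1) := by
    intro ω
    rw [pbar_succ_s13]
    field_simp
    ring
  have hrY : Integrable (fun ω => Y ω * r (n + 1) ω) μ :=
    (hbw.integrable_rating_s13 (by omega)).bdd_mul hYm hYC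
  have hmY : Integrable (fun ω => Y ω * m ω) μ := hm.bdd_mul hYm hYC
  rw [integral_congr_ae (ae_of_all _ hdecomp), integral_add, integral_const_mul, integral_div,
    integral_sub hrY hmY, hbw.integral_mul_rating_succ hn hY hYC, sub_self, zero_div, add_zero]
  · exact ((hbw.integrable_pbar_sub n).mul_bdd hYm hYC).const_mul _
  · exact (hrY.sub hmY).div_const _

lemma integral_pbar_sub_mul_eq_mul_prod (hbw : Bandwagon μ p lam r) {Y : Ω → ℝ}
    (hY : StronglyMeasurable[ratingsAlg r 1] Y) {C : ℝ} (hYC : ∀ᵐ ω ∂μ, ‖Y ω‖ ≤ C)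
    {n : ℕ} (hn : 1 ≤ n) :
    ∫ ω, (pbar r n ω - p) * Y ω ∂μ
      = (∫ ω, (r 1 ω - p) * Y ω ∂μ) * ∏ i ∈ Icc 2 n, (1 - lam i / i) := by
  induction n, hn using Nat.le_induction with
  | base => simp [pbar_one]
  | succ n hn ih =>
    rw [hbw.integral_pbar_sub_mul_succ hn (hY.mono (ratingsAlg_mono_s13 r hn)) hYC, ih,
      prod_Icc_succ_top (by omega)]
    push_cast
    ring

lemma integral_rating_one_sub_mul_sign (hbw : Bandwagon μ p lam r) :
    ∫ ω, (r 1 ω - p) * (2 * r 1 ω - 1) ∂μ = 2 * p * (1 - p) := by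
  have := hbw.prob
  have hbinary : ∀ ω, (r 1 ω - p) * (2 * r 1 ω - 1) = (1 - 2 * p) * r 1 ω + p := by
    intro ω
    rcases hbw.hbin 1 le_rfl ω with h | h <;> rw [h] <;> ring
  rw [integral_congr_ae (ae_of_all _ hbinary),
    integral_add ((hbw.integrable_rating_s13 le_rfl).const_mul _) (integrable_const p),
    integral_const_mul, hbw.hfirst]
  simp only [integral_const, probReal_univ, smul_eq_mul, one_mul]
  ring

lemma mul_prod_le_integral_abs_pbar_sub (hbw : Bandwagon μ p lam r) {n : ℕ} (hn : 1 ≤ n) :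
    2 * p * (1 - p) * ∏ i ∈ Icc 2 n, (1 - lam i / i) ≤ ∫ ω, |pbar r n ω - p| ∂μ := by
  have hsign : ∀ ω, ‖2 * r 1 ω - 1‖ ≤ 1 := fun ω => by
    rcases hbw.hbin 1 le_rfl ω with h | h <;> norm_num [h]
  have hsignm : StronglyMeasurable[ratingsAlg r 1] fun ω => 2 * r 1 ω - 1 :=
    ((measurable_rating_ratingsAlg (by simp)).const_mul 2 |>.sub_const 1).stronglyMeasurable
  rw [← hbw.integral_rating_one_sub_mul_sign,
    ← hbw.integral_pbar_sub_mul_eq_mul_prod hsignm (ae_of_all _ hsign) hn]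
  refine integral_mono ((hbw.integrable_pbar_sub n).mul_bdd
    (hsignm.mono (ratingsAlg_le_s13 hbw.hmeas 1)).aestronglyMeasurable (ae_of_all _ hsign))
    (hbw.integrable_pbar_sub n).abs fun ω => ?_
  calc (pbar r n ω - p) * (2 * r 1 ω - 1) ≤ |pbar r n ω - p| * ‖2 * r 1 ω - 1‖ := by
        rw [Real.norm_eq_abs, ← abs_mul]; exact le_abs_self _
    _ ≤ |pbar r n ω - p| := mul_le_of_le_one_right (abs_nonneg _) (hsign ω)

end Bandwagon

lemma exp_neg_add_sq_le_one_sub {x : ℝ} (h0 : 0 ≤ x) (h2 : x ≤ 1 / 2) :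
    Real.exp (-(x + x ^ 2)) ≤ 1 - x := by
  have hq := Real.quadratic_le_exp_of_nonneg (by positivity : 0 ≤ x + x ^ 2)
  rw [Real.exp_neg, inv_le_iff_one_le_mul₀ (Real.exp_pos _)]
  nlinarith

lemma exp_neg_sum_le_prod_one_sub {ι : Type*} (s : Finset ι) (x : ι → ℝ)
    (hx : ∀ i ∈ s, 0 ≤ x i ∧ x i ≤ 1 / 2) :
    Real.exp (-∑ i ∈ s, (x i + x i ^ 2)) ≤ ∏ i ∈ s, (1 - x i) := by
  rw [← sum_neg_distrib, Real.exp_sum]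
  exact prod_le_prod (fun _ _ => (Real.exp_pos _).le)
    fun i hi => exp_neg_add_sq_le_one_sub (hx i hi).1 (hx i hi).2

lemma summable_lerch {z : ℝ} (hz0 : 0 ≤ z) (hz1 : z < 1) (s : ℕ) {a : ℕ} (ha : 1 ≤ a) :
    Summable fun k : ℕ => z ^ k / ((a : ℝ) + k) ^ s := by
  refine (summable_geometric_of_lt_one hz0 hz1).of_nonneg_of_le (fun k => by positivity)
    fun k => div_le_self (by positivity) (one_le_pow₀ ?_)
  have : (1 : ℝ) ≤ a := by exact_mod_cast ha
  linarith [(k.cast_nonneg : (0 : ℝ) ≤ k)]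

lemma sum_le_mul_lerch {z : ℝ} (hz0 : 0 ≤ z) (hz1 : z < 1) (s : ℕ) {a : ℕ} (ha : 1 ≤ a) (m : ℕ) :
    ∑ k ∈ range m, z ^ (k + 1) / ((a : ℝ) + k) ^ s ≤ z * lerch z s a := by
  have hterm : ∀ k : ℕ, z * (z ^ k / ((a : ℝ) + k) ^ s) = z ^ (k + 1) / ((a : ℝ) + k) ^ s :=
    fun k => by rw [pow_succ', mul_div_assoc]
  rw [lerch, ← tsum_mul_left, tsum_congr hterm]
  exact ((summable_lerch hz0 hz1 s ha).mul_left z).congr hterm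
    |>.sum_le_tsum _ fun k _ => by positivity

lemma exp_neg_lerch_le_prod {c : ℝ} (hc0 : 0 < c) (hc1 : c < 1) (n : ℕ) :
    Real.exp (-(c * lerch c 1 2) - c ^ 2 * lerch (c ^ 2) 2 2)
      ≤ ∏ i ∈ Icc 2 n, (1 - c ^ (i - 1) / i) := by
  have hx : ∀ i ∈ Icc 2 n, 0 ≤ c ^ (i - 1) / i ∧ c ^ (i - 1) / i ≤ 1 / 2 := by
    intro i hi
    have hi2 : (2 : ℝ) ≤ i := by exact_mod_cast (mem_Icc.1 hi).1
    refine ⟨by positivity, ?_⟩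
    rw [div_le_iff₀ (by linarith)]
    nlinarith [pow_le_one₀ (n := i - 1) hc0.le hc1.le]
  have hsum : ∑ i ∈ Icc 2 n, (c ^ (i - 1) / i + (c ^ (i - 1) / i) ^ 2)
      = ∑ k ∈ range (n - 1), (c ^ (k + 1) / ((2 : ℕ) + k : ℝ) ^ 1
          + (c ^ 2) ^ (k + 1) / ((2 : ℕ) + k : ℝ) ^ 2) := by
    rw [← Ico_add_one_right_eq_Icc, sum_Ico_eq_sum_range,
      show n + 1 - 2 = n - 1 by omega]
    refine sum_congr rfl fun k _ => ?_
    rw [show 2 + k - 1 = k + 1 by omega, div_pow, ← pow_mul, ← pow_mul]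
    push_cast
    ring_nf
  have hbound := add_le_add (sum_le_mul_lerch hc0.le hc1 1 one_le_two (n - 1))
    (sum_le_mul_lerch (by positivity) (by nlinarith : c ^ 2 < 1) 2 one_le_two (n - 1))
  rw [← sum_add_distrib, ← hsum] at hbound
  calc Real.exp (-(c * lerch c 1 2) - c ^ 2 * lerch (c ^ 2) 2 2)
      ≤ Real.exp (-∑ i ∈ Icc 2 n, (c ^ (i - 1) / i + (c ^ (i - 1) / i) ^ 2)) :=
        Real.exp_le_exp.2 (by linarith)
    _ ≤ _ := exp_neg_sum_le_prod_one_sub _ _ hx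

theorem bandwagon_geometric_lambda_error_bound {Ω : Type*} [MeasurableSpace Ω] (μ : MeasureTheory.Measure Ω)
    (p : ℝ) (lam : ℕ → ℝ) (r : ℕ → Ω → ℝ)
    (hbw : Bandwagon μ p lam r) (c : ℝ)
    (hc : 0 < c ∧ c < 1) (hlam : ∀ i, 1 ≤ i → lam i = c ^ (i - 1)) :
    2 * p * (1 - p) * Real.exp (-(c * lerch c 1 2) - c ^ 2 * lerch (c ^ 2) 2 2)
      ≤ Filter.liminf (fun n : ℕ => ∫ ω, |pbar r n ω - p| ∂μ) Filter.atTop := by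
  have := hbw.prob
  have hvar : 0 ≤ 2 * p * (1 - p) := by nlinarith [hbw.hp]
  have hlower : ∀ n : ℕ, 1 ≤ n → 2 * p * (1 - p) * ∏ i ∈ Icc 2 n, (1 - c ^ (i - 1) / i)
      ≤ ∫ ω, |pbar r n ω - p| ∂μ := fun n hn => by
    have hprod : ∏ i ∈ Icc 2 n, (1 - lam i / i) = ∏ i ∈ Icc 2 n, (1 - c ^ (i - 1) / i) :=
      prod_congr rfl fun i hi => by rw [hlam i (one_le_two.trans (mem_Icc.1 hi).1)]
    exact hprod ▸ hbw.mul_prod_le_integral_abs_pbar_sub hn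
  have hupper : ∀ n : ℕ, ∫ ω, |pbar r n ω - p| ∂μ ≤ 1 := fun n => by
    simpa using integral_mono (hbw.integrable_pbar_sub n).abs (integrable_const 1)
      (hbw.abs_pbar_sub_le_one n)
  refine le_liminf_of_le (isCoboundedUnder_ge_of_le atTop hupper) ?_
  filter_upwards [eventually_ge_atTop 1] with n hn
  exact (mul_le_mul_of_nonneg_left (exp_neg_lerch_le_prod hc.1 hc.2 n) hvar).trans (hlower n hn)
end
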